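/- In the θ-deformed 4-sphere algebra O(S^4_θ), each generator T_ν of the braided derivations can be expressed in terms of the braided commutators as T_ν = Σ_μ b_μ* [T_μ, T_ν], where the sum ranges over μ ∈ {(0,0),(±1,0),(0,±1)}. -/
import Mathlib


/-!
STATEMENT 5: in the θ-deformed 4-sphere algebra `O(S^4_θ)`, each generator
`T_ν` of the braided derivations can be expressed in terms of the braided
commutators as `T_ν = Σ_μ b_μ* [T_μ, T_ν]`, the sum ranging over
`μ ∈ V = {(0,0),(±1,0),(0,±1)}`.

`O(S^4_θ)` is modelled as a `ℂ`-algebra `A`, graded by the torus weight lattice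
`ℤ × ℤ`, generated by elements `b_μ` with `b_{−μ} = b_μ*`, relations
`b_μ ∙ b_ν = λ^{2μ∧ν} b_ν ∙ b_μ` (`λ^{2μ∧ν} = q θ μ ν`, `λ = e^{−πiθ}`,
`μ∧ν = μ₁ν₂ − μ₂ν₁`), and sphere relation `Σ_μ b_μ* ∙ b_μ = 1`.  The braided
derivations `T_μ` are given on generators by `T_μ(b_ν) = δ_{μν*} − b_μ ∙ b_ν`,
extended via the braided Leibniz rule, and satisfy `Σ_μ b_μ* T_μ = 0`; the
braided commutator is `[T_μ,T_ν] = T_μ∘T_ν − λ^{2μ∧ν} T_ν∘T_μ`, and the module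
structure is `(b Y)(a) = b ∙ Y(a)`.
-/

noncomputable section

open scoped BigOperators

namespace Statement5

/-- the five weights `{(0,0),(±1,0),(0,±1)}` -/
def V : Finset (ℤ × ℤ) := {(0,0), (1,0), (-1,0), (0,1), (0,-1)}

/-- `μ∧ν := μ₁ν₂ − μ₂ν₁` -/
def wedge (p r : ℤ × ℤ) : ℤ := p.1 * r.2 - p.2 * r.1

/-- `λ^{2 μ∧ν}` with `λ = e^{−πiθ}` -/
def q (θ : ℝ) (p r : ℤ × ℤ) : ℂ :=
  Complex.exp (-((Real.pi : ℂ) * Complex.I) * (θ : ℂ) * ((2 * wedge p r : ℤ) : ℂ))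

theorem T_from_brackets
    (θ : ℝ)
    (A : Type*) [Ring A] [Algebra ℂ A]
    -- grading by torus weights
    (𝒜 : ℤ × ℤ → Submodule ℂ A) [GradedAlgebra 𝒜]
    -- generators `b_μ` of `O(S^4_θ)` (with `b_μ* = b_{−μ}`)
    (b : ℤ × ℤ → A)
    (hb : ∀ μ ∈ V, b μ ∈ 𝒜 μ)
    (hgen : Algebra.adjoin ℂ (b '' V) = ⊤)
    (hcomm : ∀ μ ∈ V, ∀ ν ∈ V, b μ * b ν = q θ μ ν • (b ν * b μ))
    (hsph : ∑ μ ∈ V, b (-μ) * b μ = 1)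
    -- the braided derivations `T_μ`
    (T : ℤ × ℤ → Module.End ℂ A)
    (hTval : ∀ μ ∈ V, ∀ ν ∈ V, T μ (b ν) = (if μ = -ν then 1 else 0) - b μ * b ν)
    (hTLeib : ∀ μ ∈ V, ∀ (m : ℤ × ℤ) (x y : A), x ∈ 𝒜 m →
      T μ (x * y) = T μ x * y + q θ μ m • (x * T μ y))
    (hTsum : (∑ μ ∈ V, (LinearMap.mulLeft ℂ (b (-μ))) ∘ₗ T μ) = 0) :
    -- `T_ν = Σ_μ b_μ* [T_μ, T_ν]`
    ∀ ν ∈ V,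
      T ν = ∑ μ ∈ V,
        (LinearMap.mulLeft ℂ (b (-μ))) ∘ₗ (T μ ∘ₗ T ν - q θ μ ν • (T ν ∘ₗ T μ)) := by
  intro ν hν
  have hnegV : ∀ μ ∈ V, -μ ∈ V := by decide
  have hqsymm : ∀ μ : ℤ × ℤ, q θ ν (-μ) = q θ μ ν := by
    intro μ
    have hw : wedge ν (-μ) = wedge μ ν := by simp [wedge]; ring
    simp [q, hw]
  ext x
  simp only [LinearMap.sum_apply, LinearMap.comp_apply, LinearMap.sub_apply,
    LinearMap.smul_apply, LinearMap.mulLeft_apply]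
  -- first: Σ b(-μ) * Tμ x = 0, and Σ b(-μ) * Tμ (Tν x) = 0
  have hsum0 : ∀ y : A, ∑ μ ∈ V, b (-μ) * T μ y = 0 := by
    intro y
    have := LinearMap.congr_fun hTsum y
    simpa using this
  -- key per-term identity
  have hkey : ∀ μ ∈ V, q θ μ ν • (b (-μ) * T ν (T μ x))
      = T ν (b (-μ) * T μ x) - T ν (b (-μ)) * T μ x := by
    intro μ hμ
    have hL := hTLeib ν hν (-μ) (b (-μ)) (T μ x) (hb (-μ) (hnegV μ hμ))
    rw [hL, hqsymm μ]
    abel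
  have step1 : ∑ μ ∈ V, b (-μ) * (T μ (T ν x) - q θ μ ν • T ν (T μ x))
      = ∑ μ ∈ V, (b (-μ) * T μ (T ν x)
          - (T ν (b (-μ) * T μ x) - T ν (b (-μ)) * T μ x)) := by
    refine Finset.sum_congr rfl fun μ hμ => ?_
    rw [mul_sub, mul_smul_comm, hkey μ hμ]
  rw [step1, Finset.sum_sub_distrib, hsum0, Finset.sum_sub_distrib, ← map_sum,
    hsum0, map_zero]
  have hval : ∀ μ ∈ V, T ν (b (-μ)) * T μ x
      = ((if μ = ν then (1:A) else 0) - b ν * b (-μ)) * T μ x := by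
    intro μ hμ
    rw [hTval ν hν (-μ) (hnegV μ hμ)]
    congr 2
    simp [eq_comm]
  rw [Finset.sum_congr rfl hval]
  simp only [sub_mul, ite_mul, one_mul, zero_mul, mul_assoc]
  rw [Finset.sum_sub_distrib, Finset.sum_ite_eq' V ν (fun μ => T μ x),
    ← Finset.mul_sum, hsum0, mul_zero, if_pos hν]
  abel

end Statement5
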